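/- arXiv:1310.0285 — 8 statements merged into one kernel-verified Lean document; each statement's English description precedes it below -/
import Mathlib

section
/- Let V be a commutative real algebra with a positive definite inner product satisfying (u, v·w) = (u·v, w) for all u,v,w, and suppose the strong Norton inequality holds: (u·u, v·v) ≥ (u·v, u·v) with equality if and only if the adjoint maps ad_u and ad_v commute. Then for any idempotent x of V, the 0-eigenspace and the 1-eigenspace of the adjoint map ad_x are subalgebras of V. -/
open Module

theorem eigenspaces_are_subalgebras
    {V : Type*} [AddCommGroup V] [Module ℝ V]
    (mul : V →ₗ[ℝ] V →ₗ[ℝ] V)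
    (hcomm : ∀ u v : V, mul u v = mul v u)
    (B : V →ₗ[ℝ] V →ₗ[ℝ] ℝ)
    (hBsymm : ∀ u v : V, B u v = B v u)
    (hBpos : ∀ v : V, v ≠ 0 → 0 < B v v)
    (hM1 : ∀ u v w : V, B u (mul v w) = B (mul u v) w)
    (hM2 : ∀ u v : V, B (mul u v) (mul u v) ≤ B (mul u u) (mul v v))
    (hM2eq : ∀ u v : V, B (mul u u) (mul v v) = B (mul u v) (mul u v) ↔
      mul u ∘ₗ mul v = mul v ∘ₗ mul u)
    (x : V) (hx : mul x x = x) :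
    ∀ μ ∈ ({0, 1} : Set ℝ),
      ∀ y ∈ Module.End.eigenspace (mul x) μ,
        ∀ z ∈ Module.End.eigenspace (mul x) μ,
          mul y z ∈ Module.End.eigenspace (mul x) μ := by
  intro mu hmu y hy z hz
  rw [Module.End.mem_eigenspace_iff] at hy hz ⊢
  have hmu2 : mu * mu = mu := by rcases hmu with h | h <;> simp_all
  have key : mul x ∘ₗ mul y = mul y ∘ₗ mul x := by
    rw [← hM2eq]
    rw [hx, hy, hM1 x y y, hy]
    simp only [map_smul, LinearMap.smul_apply, smul_eq_mul]
    linear_combination -(B y y) * hmu2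
  calc mul x (mul y z) = mul y (mul x z) := LinearMap.congr_fun key z
    _ = mu • mul y z := by rw [hz, map_smul]
end

section
/- Let V be a commutative real algebra with inner product satisfying (u, v·w) = (u·v, w), and suppose V has an identity element id for the algebra product. If x₁,…,x_k are idempotents of V, λ₁,…,λ_k are real numbers, and x = Σ λᵢ xᵢ is also an idempotent, then (x,x) = Σ λᵢ (xᵢ,xᵢ). -/
theorem length_of_idempotent_combination
    {V : Type*} [AddCommGroup V] [Module ℝ V]
    (mul : V →ₗ[ℝ] V →ₗ[ℝ] V)
    (hcomm : ∀ u v : V, mul u v = mul v u)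
    (B : V →ₗ[ℝ] V →ₗ[ℝ] ℝ)
    (hBsymm : ∀ u v : V, B u v = B v u)
    (hM1 : ∀ u v w : V, B u (mul v w) = B (mul u v) w)
    (e : V) (he : ∀ v : V, mul e v = v)
    (k : ℕ) (x : Fin k → V) (hx : ∀ i, mul (x i) (x i) = x i)
    (lam : Fin k → ℝ)
    (hX : mul (∑ i, lam i • x i) (∑ i, lam i • x i) = ∑ i, lam i • x i) :
    B (∑ i, lam i • x i) (∑ i, lam i • x i) = ∑ i, lam i * B (x i) (x i) := by
  have key : ∀ u v : V, B e (mul u v) = B u v := fun u v => by rw [hM1, he]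
  calc B (∑ i, lam i • x i) (∑ i, lam i • x i)
      = B e (mul (∑ i, lam i • x i) (∑ i, lam i • x i)) := (key _ _).symm
    _ = B e (∑ i, lam i • x i) := by rw [hX]
    _ = ∑ i, lam i * B e (x i) := by simp [map_sum]
    _ = ∑ i, lam i * B (x i) (x i) := by
        refine Finset.sum_congr rfl fun i _ => ?_
        conv_lhs => rw [← hx i, key]
end

section
/- Let V be a commutative real algebra with a positive definite inner product satisfying the associativity axiom (u, v·w) = (u·v, w), the Norton inequality (u·u, v·v) ≥ (u·v, u·v), and possessing an algebra identity id. For idempotents x, y of V the following are equivalent: (i) (x,y) = 0; (ii) x·y = 0; (iii) x + y is idempotent. -/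
theorem orthogonal_idempotents_tfae
    {V : Type*} [AddCommGroup V] [Module ℝ V]
    (mul : V →ₗ[ℝ] V →ₗ[ℝ] V)
    (hcomm : ∀ u v : V, mul u v = mul v u)
    (B : V →ₗ[ℝ] V →ₗ[ℝ] ℝ)
    (hBsymm : ∀ u v : V, B u v = B v u)
    (hBpos : ∀ v : V, v ≠ 0 → 0 < B v v)
    (hM1 : ∀ u v w : V, B u (mul v w) = B (mul u v) w)
    (hM2 : ∀ u v : V, B (mul u v) (mul u v) ≤ B (mul u u) (mul v v))
    (e : V) (he : ∀ v : V, mul e v = v)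
    (x y : V) (hx : mul x x = x) (hy : mul y y = y) :
    (B x y = 0 ↔ mul x y = 0) ∧
    (mul x y = 0 ↔ mul (x + y) (x + y) = x + y) := by
  constructor
  · constructor
    · intro h
      by_contra hne
      have h1 : B (mul x y) (mul x y) ≤ B x y := by
        have := hM2 x y
        rwa [hx, hy] at this
      have h2 : 0 < B (mul x y) (mul x y) := hBpos _ hne
      linarith
    · intro h
      have : B y (mul x x) = B (mul y x) x := hM1 y x x
      rw [hx, hcomm y x, h] at this
      rw [hBsymm]
      simpa using this
  · constructor
    · intro h
      simp only [map_add, LinearMap.add_apply, hx, hy, hcomm y x, h]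
      abel
    · intro h
      simp only [map_add, LinearMap.add_apply, hx, hy, hcomm y x] at h
      have h2 : (2:ℝ) • mul x y = 0 := by
        have : (2:ℝ) • mul x y = (x + mul x y + (mul x y + y)) - (x + y) := by
          rw [two_smul]; abel
        rw [this, h, sub_self]
      have := smul_eq_zero.mp h2
      simpa using this
end

section
/- Consider the Norton-Sakuma algebra of type 2A: the 3-dimensional commutative real algebra with basis a_t, a_g, a_ρ where each basis vector is idempotent and a_t·a_g = (1/8)(a_t + a_g − a_ρ), a_t·a_ρ = (1/8)(a_t + a_ρ − a_g), a_g·a_ρ = (1/8)(a_g + a_ρ − a_t). Then the spectrum of the adjoint map ad_{a_t} is exactly {0, 1, 1/4}, each eigenvalue being simple. -/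
/-!
In the basis `-e₀ + 4e₁ + 4e₂, e₀, e₁ - e₂` the adjoint map of `e₀` is diagonal with entries
`0, 1, 1/4`, as the defining products show directly. An endomorphism that is diagonal with
pairwise distinct entries in some basis has exactly those entries as eigenvalues, each with a
one-dimensional eigenspace.
-/

open Module

namespace Module.End

section DiagonalInBasis

variable {ι K V : Type*} [Field K] [AddCommGroup V] [Module K V]
  {f : End K V} (b : Basis ι K V) {μ : ι → K}

theorem repr_apply_of_apply_basis_eq_smul (hb : ∀ i, f (b i) = μ i • b i) (v : V) (i : ι) :
    b.repr (f v) i = μ i * b.repr v i := by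
  have hcoord : b.coord i ∘ₗ f = μ i • b.coord i := b.ext fun j => by
    rcases eq_or_ne i j with rfl | hij
    · simp [hb]
    · simp [hb, hij]
  exact LinearMap.congr_fun hcoord v

theorem mem_eigenspace_iff_repr_eq_zero (hb : ∀ i, f (b i) = μ i • b i) {ν : K} {v : V} :
    v ∈ f.eigenspace ν ↔ ∀ i, μ i ≠ ν → b.repr v i = 0 := by
  rw [mem_eigenspace_iff, b.ext_elem_iff]
  simp only [repr_apply_of_apply_basis_eq_smul b hb, map_smul, Finsupp.smul_apply, smul_eq_mul]
  refine forall_congr' fun i => ⟨fun h hi => ?_, fun h => ?_⟩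
  · exact (mul_eq_zero.mp (by linear_combination h : (μ i - ν) * b.repr v i = 0)).resolve_left
      (sub_ne_zero.mpr hi)
  · rcases eq_or_ne (μ i) ν with hi | hi
    · rw [hi]
    · rw [h hi, mul_zero, mul_zero]

theorem eigenspace_eq_bot_of_notMem_range (hb : ∀ i, f (b i) = μ i • b i) {ν : K}
    (hν : ν ∉ Set.range μ) : f.eigenspace ν = ⊥ := by
  refine (Submodule.eq_bot_iff _).mpr fun v hv => b.forall_coord_eq_zero_iff.mp fun i => ?_
  exact (mem_eigenspace_iff_repr_eq_zero b hb).mp hv i fun hi => hν ⟨i, hi⟩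

theorem eigenspace_eq_span_singleton (hb : ∀ i, f (b i) = μ i • b i) (hμ : Function.Injective μ)
    (i : ι) : f.eigenspace (μ i) = K ∙ b i := by
  ext v
  rw [mem_eigenspace_iff_repr_eq_zero b hb, Submodule.mem_span_singleton]
  constructor
  · intro hv
    refine ⟨b.repr v i, b.ext_elem fun j => ?_⟩
    rcases eq_or_ne j i with rfl | hji
    · simp
    · simp [hji, hv j (hμ.ne hji)]
  · rintro ⟨c, rfl⟩ j hj
    simp [ne_of_apply_ne μ hj]

theorem hasEigenvalue_iff_mem_range (hb : ∀ i, f (b i) = μ i • b i) {ν : K} :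
    f.HasEigenvalue ν ↔ ν ∈ Set.range μ := by
  refine ⟨fun h => ?_, ?_⟩
  · by_contra hν
    exact hasEigenvalue_iff.mp h (eigenspace_eq_bot_of_notMem_range b hb hν)
  · rintro ⟨i, rfl⟩
    exact hasEigenvalue_of_hasEigenvector ⟨mem_eigenspace_iff.mpr (hb i), b.ne_zero i⟩

theorem finrank_eigenspace_eq_one (hb : ∀ i, f (b i) = μ i • b i) (hμ : Function.Injective μ)
    (i : ι) : finrank K (f.eigenspace (μ i)) = 1 := by
  rw [eigenspace_eq_span_singleton b hb hμ]
  exact finrank_span_singleton (b.ne_zero i)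

end DiagonalInBasis

end Module.End

theorem spectrum_2A_axis_general
    (mul : (Fin 3 → ℝ) →ₗ[ℝ] (Fin 3 → ℝ) →ₗ[ℝ] (Fin 3 → ℝ))
    (e : Fin 3 → (Fin 3 → ℝ)) (he : ∀ i, e i = Pi.single i 1)
    (hidem : ∀ i, mul (e i) (e i) = e i)
    (h01 : mul (e 0) (e 1) = (1/8 : ℝ) • (e 0 + e 1 - e 2))
    (h02 : mul (e 0) (e 2) = (1/8 : ℝ) • (e 0 + e 2 - e 1)) :
    (∀ μ : ℝ, Module.End.HasEigenvalue (mul (e 0)) μ ↔ μ ∈ ({0, 1, 1/4} : Set ℝ)) ∧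
    (∀ μ ∈ ({0, 1, 1/4} : Set ℝ),
      Module.finrank ℝ (Module.End.eigenspace (mul (e 0)) μ) = 1) := by
  set μ : Fin 3 → ℝ := ![0, 1, 1/4]
  set w : Fin 3 → (Fin 3 → ℝ) := ![-e 0 + (4 : ℝ) • e 1 + (4 : ℝ) • e 2, e 0, e 1 - e 2]
  have hw : ∀ i, mul (e 0) (w i) = μ i • w i := by
    intro i
    fin_cases i <;> simp [w, μ, hidem, h01, h02] <;> module
  have hli : LinearIndependent ℝ w := by
    refine Fintype.linearIndependent_iff.mpr fun g hg => ?_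
    have h0 := congrFun hg 0
    have h1 := congrFun hg 1
    have h2 := congrFun hg 2
    simp [Fin.sum_univ_three, w, he] at h0 h1 h2
    intro i
    fin_cases i <;> simp <;> linarith
  let b := basisOfLinearIndependentOfCardEqFinrank hli (by simp)
  have hb : ∀ i, mul (e 0) (b i) = μ i • b i := by
    simpa [b] using hw
  have hμ : Function.Injective μ := by
    simp [μ, Function.Injective, Fin.forall_fin_succ]
  have hrange : Set.range μ = {0, 1, 1/4} := by
    ext; simp [μ, Matrix.range_cons]; tauto
  refine ⟨fun ν => hrange ▸ Module.End.hasEigenvalue_iff_mem_range b hb, ?_⟩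
  rw [← hrange]
  rintro _ ⟨i, rfl⟩
  exact Module.End.finrank_eigenspace_eq_one b hb hμ i

theorem spectrum_2A_axis
    (mul : (Fin 3 → ℝ) →ₗ[ℝ] (Fin 3 → ℝ) →ₗ[ℝ] (Fin 3 → ℝ))
    (hcomm : ∀ u v, mul u v = mul v u)
    (e : Fin 3 → (Fin 3 → ℝ)) (he : ∀ i, e i = Pi.single i 1)
    (hidem : ∀ i, mul (e i) (e i) = e i)
    (h01 : mul (e 0) (e 1) = (1/8 : ℝ) • (e 0 + e 1 - e 2))
    (h02 : mul (e 0) (e 2) = (1/8 : ℝ) • (e 0 + e 2 - e 1))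
    (h12 : mul (e 1) (e 2) = (1/8 : ℝ) • (e 1 + e 2 - e 0)) :
    (∀ μ : ℝ, Module.End.HasEigenvalue (mul (e 0)) μ ↔ μ ∈ ({0, 1, 1/4} : Set ℝ)) ∧
    (∀ μ ∈ ({0, 1, 1/4} : Set ℝ),
      Module.finrank ℝ (Module.End.eigenspace (mul (e 0)) μ) = 1) :=
  spectrum_2A_axis_general mul e he hidem h01 h02
end

section
/- In the Norton-Sakuma algebra of type 3C (commutative real algebra with basis a_t, a_g, a_h, each idempotent, and product of any two distinct basis vectors a_x·a_y = (1/64)(a_x + a_y − a_z) where {x,y,z} = {t,g,h}), the spectrum of ad_{a_t} is exactly {0, 1, 1/32}, with each eigenvalue simple. -/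
/-! In the basis `a_t, a_g, a_h`, the operator `ad_{a_t}` has the eigenvectors `a_t` (eigenvalue 1),
`a_g - a_h` (eigenvalue 1/32) and `a_g + a_h - a_t/32` (eigenvalue 0). Three eigenvectors with
distinct eigenvalues in dimension three form an eigenbasis, so `ad_{a_t}` is diagonal with
pairwise distinct diagonal entries: its spectrum is the set of those entries and each eigenspace
is a line. -/

open Module

namespace Module.End

open Matrix

variable {K V ι : Type*} [Field K] [AddCommGroup V] [Module K V] [Fintype ι] [DecidableEq ι]
  {f : End K V} {d : ι → K}

theorem eigenspace_toLin_diagonal_eq_span (b : Basis ι K V) (hd : Function.Injective d) (i : ι) :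
    eigenspace (toLin b b (diagonal d)) (d i) = K ∙ b i := by
  refine le_antisymm (fun x hx ↦ ?_) ?_
  · rw [mem_eigenspace_iff] at hx
    have hcoord : ∀ j, j ≠ i → b.repr x j = 0 := fun j hji ↦ by
      have hj : d j * b.repr x j = d i * b.repr x j := by
        simpa [repr_toLin, mulVec_diagonal] using congrArg (fun y ↦ b.repr y j) hx
      exact (mul_right_injective₀ (sub_ne_zero.2 (hd.ne hji))).eq_iff.1 (by linear_combination hj)
    refine Submodule.mem_span_singleton.2 ⟨b.repr x i, b.ext_elem_iff.2 fun j ↦ ?_⟩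
    by_cases hji : j = i
    · simp [hji]
    · simp [hcoord j hji, Ne.symm hji]
  · rw [Submodule.span_singleton_le_iff_mem]
    exact (hasEigenvector_toLin_diagonal d i b).1

variable [FiniteDimensional K V] {v : ι → V}

theorem exists_basis_eq_toLin_diagonal_of_hasEigenvector (hd : Function.Injective d)
    (hv : ∀ i, f.HasEigenvector (d i) (v i)) (hcard : Fintype.card ι = finrank K V) :
    ∃ b : Basis ι K V, ⇑b = v ∧ f = toLin b b (diagonal d) := by
  let b := basisOfLinearIndependentOfCardEqFinrank' v
    (f.eigenvectors_linearIndependent' d hd v hv) hcard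
  have hb : ⇑b = v := Basis.coe_mk _ _
  refine ⟨b, hb, b.ext fun i ↦ ?_⟩
  rw [(hasEigenvector_toLin_diagonal d i b).apply_eq_smul, hb, (hv i).apply_eq_smul]

theorem hasEigenvalue_iff_mem_range_of_hasEigenvector (hd : Function.Injective d)
    (hv : ∀ i, f.HasEigenvector (d i) (v i)) (hcard : Fintype.card ι = finrank K V) {μ : K} :
    f.HasEigenvalue μ ↔ μ ∈ Set.range d := by
  obtain ⟨b, -, rfl⟩ := exists_basis_eq_toLin_diagonal_of_hasEigenvector hd hv hcard
  exact hasEigenvalue_toLin_diagonal_iff d b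

theorem eigenspace_eq_span_of_hasEigenvector (hd : Function.Injective d)
    (hv : ∀ i, f.HasEigenvector (d i) (v i)) (hcard : Fintype.card ι = finrank K V) (i : ι) :
    f.eigenspace (d i) = K ∙ v i := by
  obtain ⟨b, rfl, rfl⟩ := exists_basis_eq_toLin_diagonal_of_hasEigenvector hd hv hcard
  exact eigenspace_toLin_diagonal_eq_span b hd i

end Module.End

theorem spectrum_3C_axis_general
    (mul : (Fin 3 → ℝ) →ₗ[ℝ] (Fin 3 → ℝ) →ₗ[ℝ] (Fin 3 → ℝ))
    (e : Fin 3 → (Fin 3 → ℝ)) (he : ∀ i, e i = Pi.single i 1)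
    (hidem : ∀ i, mul (e i) (e i) = e i)
    (h01 : mul (e 0) (e 1) = (1/64 : ℝ) • (e 0 + e 1 - e 2))
    (h02 : mul (e 0) (e 2) = (1/64 : ℝ) • (e 0 + e 2 - e 1)) :
    (∀ μ : ℝ, Module.End.HasEigenvalue (mul (e 0)) μ ↔ μ ∈ ({0, 1, 1/32} : Set ℝ)) ∧
    (∀ μ ∈ ({0, 1, 1/32} : Set ℝ),
      Module.finrank ℝ (Module.End.eigenspace (mul (e 0)) μ) = 1) := by
  let d : Fin 3 → ℝ := ![0, 1, 1/32]
  let v : Fin 3 → Fin 3 → ℝ := ![e 1 + e 2 - (1/32 : ℝ) • e 0, e 0, e 1 - e 2]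
  have hd : Function.Injective d := by simp [Function.Injective, Fin.forall_fin_succ, d]
  have hv : ∀ i, Module.End.HasEigenvector (mul (e 0)) (d i) (v i) := by
    intro i
    refine ⟨Module.End.mem_eigenspace_iff.2 ?_, ?_⟩
    · fin_cases i <;> simp only [v, d, Fin.zero_eta, Fin.mk_one, Fin.reduceFinMk, Matrix.cons_val_zero,
        Matrix.cons_val_one, Matrix.cons_val, map_add, map_sub, map_smul, hidem, h01, h02] <;> module
    · fin_cases i <;> simp [v, he, funext_iff, Fin.exists_fin_succ]
  have hcard : Fintype.card (Fin 3) = finrank ℝ (Fin 3 → ℝ) := by simp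
  have hrange : Set.range d = {0, 1, 1/32} := by
    simp only [d, Matrix.range_cons, Matrix.range_empty, Set.union_empty, Set.singleton_union]
  rw [← hrange]
  refine ⟨fun μ ↦ Module.End.hasEigenvalue_iff_mem_range_of_hasEigenvector hd hv hcard, ?_⟩
  rintro _ ⟨i, rfl⟩
  rw [Module.End.eigenspace_eq_span_of_hasEigenvector hd hv hcard, finrank_span_singleton (hv i).2]

theorem spectrum_3C_axis
    (mul : (Fin 3 → ℝ) →ₗ[ℝ] (Fin 3 → ℝ) →ₗ[ℝ] (Fin 3 → ℝ))
    (hcomm : ∀ u v, mul u v = mul v u)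
    (e : Fin 3 → (Fin 3 → ℝ)) (he : ∀ i, e i = Pi.single i 1)
    (hidem : ∀ i, mul (e i) (e i) = e i)
    (h01 : mul (e 0) (e 1) = (1/64 : ℝ) • (e 0 + e 1 - e 2))
    (h02 : mul (e 0) (e 2) = (1/64 : ℝ) • (e 0 + e 2 - e 1))
    (h12 : mul (e 1) (e 2) = (1/64 : ℝ) • (e 1 + e 2 - e 0)) :
    (∀ μ : ℝ, Module.End.HasEigenvalue (mul (e 0)) μ ↔ μ ∈ ({0, 1, 1/32} : Set ℝ)) ∧
    (∀ μ ∈ ({0, 1, 1/32} : Set ℝ),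
      Module.finrank ℝ (Module.End.eigenspace (mul (e 0)) μ) = 1) :=
  spectrum_3C_axis_general mul e he hidem h01 h02
end

section
/- In the Norton-Sakuma algebra of type 4A, for every real λ with −3/5 ≤ λ ≤ 1, the element y(λ) := f(λ)(a_t + a_{g₂}) + f̄(λ)(a_g + a_{g₋₁}) + λ v_ρ is an idempotent, where f(λ) = (1−λ)/2 − (1/6)√(−15λ² + 6λ + 9) and f̄(λ) = (1−λ)/2 + (1/6)√(−15λ² + 6λ + 9). -/
theorem four_A_family_of_idempotents
    (mul : (Fin 5 → ℝ) →ₗ[ℝ] (Fin 5 → ℝ) →ₗ[ℝ] (Fin 5 → ℝ))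
    (hcomm : ∀ u v, mul u v = mul v u)
    (e : Fin 5 → (Fin 5 → ℝ)) (he : ∀ i, e i = Pi.single i 1)
    -- basis: e 0 = a_t, e 1 = a_g, e 2 = a_{g₂}, e 3 = a_{g₋₁}, e 4 = v_ρ
    (hidem : ∀ i, mul (e i) (e i) = e i)
    (h02 : mul (e 0) (e 2) = 0)
    (h13 : mul (e 1) (e 3) = 0)
    (h01 : mul (e 0) (e 1) =
      (1/64 : ℝ) • (3 • e 0 + 3 • e 1 + e 2 + e 3 - 3 • e 4))
    (h12 : mul (e 1) (e 2) =
      (1/64 : ℝ) • (3 • e 1 + 3 • e 2 + e 3 + e 0 - 3 • e 4))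
    (h23 : mul (e 2) (e 3) =
      (1/64 : ℝ) • (3 • e 2 + 3 • e 3 + e 0 + e 1 - 3 • e 4))
    (h30 : mul (e 3) (e 0) =
      (1/64 : ℝ) • (3 • e 3 + 3 • e 0 + e 1 + e 2 - 3 • e 4))
    (h0v : mul (e 0) (e 4) =
      (1/16 : ℝ) • (5 • e 0 - 2 • e 1 - e 2 - 2 • e 3 + 3 • e 4))
    (h1v : mul (e 1) (e 4) =
      (1/16 : ℝ) • (5 • e 1 - 2 • e 0 - e 3 - 2 • e 2 + 3 • e 4))
    (h2v : mul (e 2) (e 4) =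
      (1/16 : ℝ) • (5 • e 2 - 2 • e 1 - e 0 - 2 • e 3 + 3 • e 4))
    (h3v : mul (e 3) (e 4) =
      (1/16 : ℝ) • (5 • e 3 - 2 • e 0 - e 1 - 2 • e 2 + 3 • e 4)) :
    ∀ lam ∈ Set.Icc (-(3/5) : ℝ) 1,
      (mul
        (((1 - lam)/2 - Real.sqrt (-15*lam^2 + 6*lam + 9)/6) • (e 0 + e 2)
          + ((1 - lam)/2 + Real.sqrt (-15*lam^2 + 6*lam + 9)/6) • (e 1 + e 3)
          + lam • e 4)
        (((1 - lam)/2 - Real.sqrt (-15*lam^2 + 6*lam + 9)/6) • (e 0 + e 2)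
          + ((1 - lam)/2 + Real.sqrt (-15*lam^2 + 6*lam + 9)/6) • (e 1 + e 3)
          + lam • e 4)) =
      ((1 - lam)/2 - Real.sqrt (-15*lam^2 + 6*lam + 9)/6) • (e 0 + e 2)
        + ((1 - lam)/2 + Real.sqrt (-15*lam^2 + 6*lam + 9)/6) • (e 1 + e 3)
        + lam • e 4 := by
  intro lam hlam
  obtain ⟨hl, hu⟩ := hlam
  set s := Real.sqrt (-15*lam^2 + 6*lam + 9) with hsdef
  have hs : s^2 = -15*lam^2 + 6*lam + 9 := Real.sq_sqrt (by nlinarith [mul_nonneg (by linarith : (0:ℝ) ≤ 1 - lam) (by linarith : (0:ℝ) ≤ 15*lam + 9)])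
  have h20 : mul (e 2) (e 0) = 0 := by rw [hcomm]; exact h02
  have h31 : mul (e 3) (e 1) = 0 := by rw [hcomm]; exact h13
  have h10 : mul (e 1) (e 0) = mul (e 0) (e 1) := hcomm _ _
  have h21 : mul (e 2) (e 1) = mul (e 1) (e 2) := hcomm _ _
  have h32 : mul (e 3) (e 2) = mul (e 2) (e 3) := hcomm _ _
  have h03 : mul (e 0) (e 3) = mul (e 3) (e 0) := hcomm _ _
  have hv0 : mul (e 4) (e 0) = mul (e 0) (e 4) := hcomm _ _
  have hv1 : mul (e 4) (e 1) = mul (e 1) (e 4) := hcomm _ _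
  have hv2 : mul (e 4) (e 2) = mul (e 2) (e 4) := hcomm _ _
  have hv3 : mul (e 4) (e 3) = mul (e 3) (e 4) := hcomm _ _
  simp only [map_add, map_smul, LinearMap.add_apply, LinearMap.smul_apply,
    h10, h21, h32, h03, hv0, hv1, hv2, hv3, h20, h31,
    hidem 0, hidem 1, hidem 2, hidem 3, hidem 4,
    h02, h13, h01, h12, h23, h30, h0v, h1v, h2v, h3v]
  match_scalars
  all_goals (try (linear_combination (1/48 : ℝ) * hs))
  all_goals linear_combination (1/96 : ℝ) * hs
end

section
/- In the Norton-Sakuma algebra of type 3A, the element y := (2/9)(4a_t + 4a_g + a_{g₋₁}) − (1/4)u_ρ is an idempotent, and the spectrum of ad_y is {0, 1, 1/3, 13/16} with all eigenvalues simple. -/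
/-!
Four explicit eigenvectors of `ad_y` with the pairwise distinct eigenvalues `0, 1, 1/3, 13/16`
exhaust the dimension of the algebra, so these are all the roots of the characteristic
polynomial of `ad_y`, each of multiplicity one; the geometric multiplicity of an eigenvalue is
at most its algebraic multiplicity, hence every eigenspace is a line.
-/

open Module

namespace Module.End

variable {K V : Type*} [Field K] [AddCommGroup V] [Module K V] [FiniteDimensional K V]
  {f : End K V} {s : Finset K}

theorem charpoly_roots_eq_of_finrank_le_card (hs : ∀ μ ∈ s, f.HasEigenvalue μ)
    (hcard : finrank K V ≤ s.card) : f.charpoly.roots = s.val := by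
  have hsub : s.val ≤ f.charpoly.roots :=
    (Multiset.le_iff_subset s.nodup).mpr fun μ hμ =>
      (Polynomial.mem_roots f.charpoly_monic.ne_zero).mpr
        ((hasEigenvalue_iff_isRoot_charpoly f μ).mp (hs μ hμ))
  refine (Multiset.eq_of_le_of_card_le hsub ?_).symm
  calc Multiset.card f.charpoly.roots ≤ f.charpoly.natDegree := Polynomial.card_roots' _
    _ = finrank K V := LinearMap.charpoly_natDegree f
    _ ≤ s.card := hcard

theorem hasEigenvalue_iff_mem_of_finrank_le_card (hs : ∀ μ ∈ s, f.HasEigenvalue μ)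
    (hcard : finrank K V ≤ s.card) (μ : K) : f.HasEigenvalue μ ↔ μ ∈ s := by
  rw [hasEigenvalue_iff_isRoot_charpoly, ← Polynomial.mem_roots f.charpoly_monic.ne_zero,
    charpoly_roots_eq_of_finrank_le_card hs hcard, Finset.mem_val]

theorem finrank_eigenspace_eq_one_of_finrank_le_card (hs : ∀ μ ∈ s, f.HasEigenvalue μ)
    (hcard : finrank K V ≤ s.card) {μ : K} (hμ : μ ∈ s) : finrank K (f.eigenspace μ) = 1 := by
  classical
  refine le_antisymm ?_ (Submodule.one_le_finrank_iff.mpr (hs μ hμ))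
  calc finrank K (f.eigenspace μ) ≤ f.charpoly.rootMultiplicity μ :=
        LinearMap.finrank_eigenspace_le f μ
    _ = 1 := by
      rw [← Polynomial.count_roots, charpoly_roots_eq_of_finrank_le_card hs hcard,
        Multiset.count_eq_one_of_mem s.nodup hμ]

end Module.End

theorem LinearMap.apply_apply_eq_sum_single {R M ι : Type*} [CommSemiring R] [AddCommMonoid M]
    [Module R M] [Fintype ι] [DecidableEq ι] (B : (ι → R) →ₗ[R] (ι → R) →ₗ[R] M) (u v : ι → R) :
    B u v = ∑ i, ∑ j, (u i * v j) • B (Pi.single i 1) (Pi.single j 1) := by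
  conv_lhs => rw [pi_eq_sum_univ' u, pi_eq_sum_univ' v]
  simp only [map_sum, map_smul, LinearMap.coe_sum, Finset.sum_apply, LinearMap.smul_apply,
    Finset.smul_sum, smul_smul]
  rw [Finset.sum_comm]
  simp only [mul_comm]

/-- `threeAMulTable i j` is the product of the `i`-th and `j`-th basis vectors of `V_{3A}`, in
coordinates with respect to the basis `(a_t, a_g, a_{g₋₁}, u_ρ)`. -/
noncomputable def threeAMulTable : Fin 4 → Fin 4 → Fin 4 → ℝ :=
  ![![![1, 0, 0, 0], ![1/16, 1/16, 1/32, -135/2048], ![1/16, 1/32, 1/16, -135/2048],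
      ![2/9, -1/9, -1/9, 5/32]],
    ![![1/16, 1/16, 1/32, -135/2048], ![0, 1, 0, 0], ![1/32, 1/16, 1/16, -135/2048],
      ![-1/9, 2/9, -1/9, 5/32]],
    ![![1/16, 1/32, 1/16, -135/2048], ![1/32, 1/16, 1/16, -135/2048], ![0, 0, 1, 0],
      ![-1/9, -1/9, 2/9, 5/32]],
    ![![2/9, -1/9, -1/9, 5/32], ![-1/9, 2/9, -1/9, 5/32], ![-1/9, -1/9, 2/9, 5/32],
      ![0, 0, 0, 1]]]

noncomputable def threeAMul (u v : Fin 4 → ℝ) : Fin 4 → ℝ :=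
  ∑ i, ∑ j, (u i * v j) • threeAMulTable i j

theorem mul_eq_threeAMul
    (mul : (Fin 4 → ℝ) →ₗ[ℝ] (Fin 4 → ℝ) →ₗ[ℝ] (Fin 4 → ℝ))
    (hcomm : ∀ u v, mul u v = mul v u)
    (e : Fin 4 → (Fin 4 → ℝ)) (he : ∀ i, e i = Pi.single i 1)
    (hidem : ∀ i, mul (e i) (e i) = e i)
    (h01 : mul (e 0) (e 1) =
      (1/32 : ℝ) • (2 • e 0 + 2 • e 1 + e 2) - (135/2048 : ℝ) • e 3)
    (h02 : mul (e 0) (e 2) =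
      (1/32 : ℝ) • (2 • e 0 + 2 • e 2 + e 1) - (135/2048 : ℝ) • e 3)
    (h12 : mul (e 1) (e 2) =
      (1/32 : ℝ) • (2 • e 1 + 2 • e 2 + e 0) - (135/2048 : ℝ) • e 3)
    (h0u : mul (e 0) (e 3) =
      (1/9 : ℝ) • (2 • e 0 - e 1 - e 2) + (5/32 : ℝ) • e 3)
    (h1u : mul (e 1) (e 3) =
      (1/9 : ℝ) • (2 • e 1 - e 0 - e 2) + (5/32 : ℝ) • e 3)
    (h2u : mul (e 2) (e 3) =
      (1/9 : ℝ) • (2 • e 2 - e 0 - e 1) + (5/32 : ℝ) • e 3) (u v : Fin 4 → ℝ) :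
    mul u v = threeAMul u v := by
  have table (i j : Fin 4) : mul (e i) (e j) = threeAMulTable i j := by
    fin_cases i <;> fin_cases j <;>
      simp only [Fin.zero_eta, Fin.mk_one, Fin.reduceFinMk, hidem, h01, h02, h12, h0u, h1u, h2u,
        hcomm (e 1) (e 0), hcomm (e 2) (e 0), hcomm (e 2) (e 1), hcomm (e 3) (e 0),
        hcomm (e 3) (e 1), hcomm (e 3) (e 2)] <;>
      ext k <;> fin_cases k <;> simp [he, threeAMulTable] <;> norm_num
  rw [mul.apply_apply_eq_sum_single]
  simp only [← he, table, threeAMul]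

theorem threeAMul_idempotent :
    threeAMul ![8/9, 8/9, 2/9, -1/4] ![8/9, 8/9, 2/9, -1/4] = ![8/9, 8/9, 2/9, -1/4] := by
  ext k; fin_cases k <;> simp [threeAMul, Fin.sum_univ_four, threeAMulTable] <;> norm_num

theorem threeAMul_eigenvectors :
    threeAMul ![8/9, 8/9, 2/9, -1/4] ![-32, -32, 136, 225] = (0 : ℝ) • ![-32, -32, 136, 225] ∧
    threeAMul ![8/9, 8/9, 2/9, -1/4] ![32, 32, 8, -9] = (1 : ℝ) • ![32, 32, 8, -9] ∧
    threeAMul ![8/9, 8/9, 2/9, -1/4] ![32, 32, -280, 135] =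
      (1/3 : ℝ) • ![32, 32, -280, 135] ∧
    threeAMul ![8/9, 8/9, 2/9, -1/4] ![-1, 1, 0, 0] = (13/16 : ℝ) • ![-1, 1, 0, 0] := by
  refine ⟨?_, ?_, ?_, ?_⟩ <;> ext k <;> fin_cases k <;>
    simp [threeAMul, Fin.sum_univ_four, threeAMulTable] <;> norm_num

theorem hasEigenvalue_of_forall_eq_threeAMul
    {mul : (Fin 4 → ℝ) →ₗ[ℝ] (Fin 4 → ℝ) →ₗ[ℝ] (Fin 4 → ℝ)}
    (hmul : ∀ u v, mul u v = threeAMul u v) :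
    ∀ μ ∈ ({0, 1, 1/3, 13/16} : Finset ℝ),
      Module.End.HasEigenvalue (mul ![8/9, 8/9, 2/9, -1/4]) μ := by
  have of_eigenvector {μ : ℝ} {v : Fin 4 → ℝ} (h : threeAMul ![8/9, 8/9, 2/9, -1/4] v = μ • v)
      (hv : v 1 ≠ 0) : Module.End.HasEigenvalue (mul ![8/9, 8/9, 2/9, -1/4]) μ :=
    Module.End.hasEigenvalue_of_hasEigenvector
      ⟨Module.End.mem_eigenspace_iff.mpr ((hmul _ _).trans h), ne_of_apply_ne (· 1) hv⟩
  obtain ⟨h0, h1, h3, h13⟩ := threeAMul_eigenvectors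
  simp only [Finset.mem_insert, Finset.mem_singleton]
  rintro μ (rfl | rfl | rfl | rfl)
  exacts [of_eigenvector h0 (by norm_num), of_eigenvector h1 (by norm_num),
    of_eigenvector h3 (by norm_num), of_eigenvector h13 (by norm_num)]

theorem three_A_idempotent_spectrum
    (mul : (Fin 4 → ℝ) →ₗ[ℝ] (Fin 4 → ℝ) →ₗ[ℝ] (Fin 4 → ℝ))
    (hcomm : ∀ u v, mul u v = mul v u)
    (e : Fin 4 → (Fin 4 → ℝ)) (he : ∀ i, e i = Pi.single i 1)
    -- basis: e 0 = a_t, e 1 = a_g, e 2 = a_{g₋₁}, e 3 = u_ρ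
    (hidem : ∀ i, mul (e i) (e i) = e i)
    (h01 : mul (e 0) (e 1) =
      (1/32 : ℝ) • (2 • e 0 + 2 • e 1 + e 2) - (135/2048 : ℝ) • e 3)
    (h02 : mul (e 0) (e 2) =
      (1/32 : ℝ) • (2 • e 0 + 2 • e 2 + e 1) - (135/2048 : ℝ) • e 3)
    (h12 : mul (e 1) (e 2) =
      (1/32 : ℝ) • (2 • e 1 + 2 • e 2 + e 0) - (135/2048 : ℝ) • e 3)
    (h0u : mul (e 0) (e 3) =
      (1/9 : ℝ) • (2 • e 0 - e 1 - e 2) + (5/32 : ℝ) • e 3)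
    (h1u : mul (e 1) (e 3) =
      (1/9 : ℝ) • (2 • e 1 - e 0 - e 2) + (5/32 : ℝ) • e 3)
    (h2u : mul (e 2) (e 3) =
      (1/9 : ℝ) • (2 • e 2 - e 0 - e 1) + (5/32 : ℝ) • e 3) :
    mul ((2/9 : ℝ) • (4 • e 0 + 4 • e 1 + e 2) - (1/4 : ℝ) • e 3)
        ((2/9 : ℝ) • (4 • e 0 + 4 • e 1 + e 2) - (1/4 : ℝ) • e 3) =
      (2/9 : ℝ) • (4 • e 0 + 4 • e 1 + e 2) - (1/4 : ℝ) • e 3 ∧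
    (∀ μ : ℝ,
      Module.End.HasEigenvalue
        (mul ((2/9 : ℝ) • (4 • e 0 + 4 • e 1 + e 2) - (1/4 : ℝ) • e 3)) μ ↔
        μ ∈ ({0, 1, 1/3, 13/16} : Set ℝ)) ∧
    (∀ μ ∈ ({0, 1, 1/3, 13/16} : Set ℝ),
      Module.finrank ℝ
        (Module.End.eigenspace
          (mul ((2/9 : ℝ) • (4 • e 0 + 4 • e 1 + e 2) - (1/4 : ℝ) • e 3)) μ) = 1) := by
  have hmul := mul_eq_threeAMul mul hcomm e he hidem h01 h02 h12 h0u h1u h2u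
  have hy : (2/9 : ℝ) • (4 • e 0 + 4 • e 1 + e 2) - (1/4 : ℝ) • e 3 = ![8/9, 8/9, 2/9, -1/4] := by
    ext k; fin_cases k <;> simp [he] <;> norm_num
  rw [hy]
  have heig := hasEigenvalue_of_forall_eq_threeAMul hmul
  have hcard : finrank ℝ (Fin 4 → ℝ) ≤ ({0, 1, 1/3, 13/16} : Finset ℝ).card := by
    rw [Module.finrank_fin_fun]
    norm_num [Finset.card_insert_of_notMem]
  have hS : ({0, 1, 1/3, 13/16} : Set ℝ) = ↑({0, 1, 1/3, 13/16} : Finset ℝ) := by push_cast; rfl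
  refine ⟨(hmul _ _).trans threeAMul_idempotent, fun μ => ?_, fun μ hμ => ?_⟩
  · rw [hS, Finset.mem_coe]
    exact Module.End.hasEigenvalue_iff_mem_of_finrank_le_card heig hcard μ
  · rw [hS, Finset.mem_coe] at hμ
    exact Module.End.finrank_eigenspace_eq_one_of_finrank_le_card heig hcard hμ
end

section
/- Let V be a commutative real algebra with identity and positive definite inner product satisfying M1 and M2'. If x is a nonzero idempotent with x ≠ id such that both 0 and 1 are simple eigenvalues of ad_x, then the 2-dimensional subalgebra spanned by x and id − x is a maximal associative subalgebra of V: it is associative, and any associative subalgebra of V containing it equals it. -/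
open Module

theorem trivial_maximal_associative
    {V : Type*} [AddCommGroup V] [Module ℝ V]
    (mul : V →ₗ[ℝ] V →ₗ[ℝ] V)
    (hcomm : ∀ u v : V, mul u v = mul v u)
    (B : V →ₗ[ℝ] V →ₗ[ℝ] ℝ)
    (hBsymm : ∀ u v : V, B u v = B v u)
    (hBpos : ∀ v : V, v ≠ 0 → 0 < B v v)
    (hM1 : ∀ u v w : V, B u (mul v w) = B (mul u v) w)
    (hM2 : ∀ u v : V, B (mul u v) (mul u v) ≤ B (mul u u) (mul v v))
    (hM2eq : ∀ u v : V, B (mul u u) (mul v v) = B (mul u v) (mul u v) ↔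
      mul u ∘ₗ mul v = mul v ∘ₗ mul u)
    (e : V) (he : ∀ v : V, mul e v = v)
    (x : V) (hx : mul x x = x) (hx0 : x ≠ 0) (hxe : x ≠ e)
    (h0simple : Module.finrank ℝ (Module.End.eigenspace (mul x) 0) = 1)
    (h1simple : Module.finrank ℝ (Module.End.eigenspace (mul x) 1) = 1) :
    (∀ u ∈ Submodule.span ℝ ({x, e - x} : Set V),
     ∀ v ∈ Submodule.span ℝ ({x, e - x} : Set V),
     ∀ w ∈ Submodule.span ℝ ({x, e - x} : Set V),
      mul (mul u v) w = mul u (mul v w)) ∧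
    (∀ W : Submodule ℝ V,
      (∀ u ∈ W, ∀ v ∈ W, mul u v ∈ W) →
      (∀ u ∈ W, ∀ v ∈ W, ∀ w ∈ W, mul (mul u v) w = mul u (mul v w)) →
      Submodule.span ℝ ({x, e - x} : Set V) ≤ W →
      W = Submodule.span ℝ ({x, e - x} : Set V)) := by

  classical
  set p := e - x with hp
  have hp0 : p ≠ 0 := sub_ne_zero_of_ne (Ne.symm hxe)
  have hxe' : mul x e = x := by rw [hcomm]; exact he x
  have hxp : mul x p = 0 := by
    simp only [hp, map_sub, hxe', hx, sub_self]
  have hpx : mul p x = 0 := by rw [hcomm]; exact hxp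
  have hpp : mul p p = p := by
    simp only [hp, map_sub, LinearMap.sub_apply, he, hxe', hx, sub_self, sub_zero]
  -- multiplication table on the span
  have hmul : ∀ (a b c d : ℝ), mul (a • x + b • p) (c • x + d • p)
      = (a * c) • x + (b * d) • p := by
    intro a b c d
    simp only [map_add, map_smul, LinearMap.add_apply, LinearMap.smul_apply,
      hx, hxp, hpx, hpp, smul_zero, add_zero, zero_add, smul_smul]
    rw [mul_comm c a, mul_comm d b]
  have hmemspan : ∀ u, u ∈ Submodule.span ℝ ({x, e - x} : Set V) ↔
      ∃ a b : ℝ, a • x + b • p = u := by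
    intro u
    rw [Submodule.mem_span_pair]
  constructor
  · intro u hu v hv w hw
    obtain ⟨a, b, rfl⟩ := (hmemspan u).mp hu
    obtain ⟨c, d, rfl⟩ := (hmemspan v).mp hv
    obtain ⟨f, g, rfl⟩ := (hmemspan w).mp hw
    rw [hmul, hmul, hmul, hmul]
    ring_nf
  · intro W hWmul hWassoc hle
    -- eigenspaces
    have hE1fd : FiniteDimensional ℝ (Module.End.eigenspace (mul x) 1) :=
      Module.finite_of_finrank_pos (by rw [h1simple]; norm_num)
    have hE0fd : FiniteDimensional ℝ (Module.End.eigenspace (mul x) 0) :=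
      Module.finite_of_finrank_pos (by rw [h0simple]; norm_num)
    have hx1 : x ∈ Module.End.eigenspace (mul x) 1 := by
      rw [Module.End.mem_eigenspace_iff]; simp [hx]
    have hp0mem : p ∈ Module.End.eigenspace (mul x) 0 := by
      rw [Module.End.mem_eigenspace_iff]; simp [hxp]
    have hE1 : Module.End.eigenspace (mul x) 1 = Submodule.span ℝ {x} := by
      refine (Submodule.eq_of_le_of_finrank_le (Submodule.span_le.mpr ?_) ?_).symm
      · simpa using hx1
      · rw [h1simple, finrank_span_singleton hx0]
    have hE0 : Module.End.eigenspace (mul x) 0 = Submodule.span ℝ {p} := by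
      refine (Submodule.eq_of_le_of_finrank_le (Submodule.span_le.mpr ?_) ?_).symm
      · simpa using hp0mem
      · rw [h0simple, finrank_span_singleton hp0]
    have hxW : x ∈ W := hle (Submodule.subset_span (by simp))
    refine le_antisymm (fun w hw => ?_) hle
    have h1 : mul x w ∈ Module.End.eigenspace (mul x) 1 := by
      rw [Module.End.mem_eigenspace_iff, one_smul]
      have := hWassoc x hxW x hxW w hw
      rw [hx] at this
      exact this.symm
    have h0 : w - mul x w ∈ Module.End.eigenspace (mul x) 0 := by
      rw [Module.End.mem_eigenspace_iff, zero_smul, map_sub]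
      have := hWassoc x hxW x hxW w hw
      rw [hx] at this
      rw [← this, sub_self]
    rw [hE1, Submodule.mem_span_singleton] at h1
    rw [hE0, Submodule.mem_span_singleton] at h0
    obtain ⟨a, ha⟩ := h1
    obtain ⟨b, hb⟩ := h0
    rw [hmemspan]
    refine ⟨a, b, ?_⟩
    rw [ha, hb]
    abel
end
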